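/- Let G = (V, E) be a directed graph and let u, v ∈ V be such that there is a directed path from u to v in G and the minimal length d of such a path satisfies d ≥ 1. Let u = v₀ → v₁ → ⋯ → v_d = v be a directed path of length d, with first edge e₁ = (v₀, v₁) and last edge e_d = (v_{d−1}, v_d), regarded as vertices x_u = e₁ and x_v = e_d of the directed line graph l(G). Then the minimal length of a directed path from x_u to x_v in l(G) is exactly d−1: there exists a directed path of length d−1 from x_u to x_v in l(G), and every directed path from x_u to x_v in l(G) has length at least d−1. -/
import Mathlib


/-- A directed path of length `n` in the directed graph with vertex type `V` and
edge relation `E`: a sequence of `n + 1` vertices with a directed edge between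
consecutive vertices. -/
def IsDipath {V : Type*} (E : V → V → Prop) {n : ℕ} (p : Fin (n + 1) → V) : Prop :=
  ∀ i : ℕ, ∀ h : i + 1 < n + 1, E (p ⟨i, Nat.lt_of_succ_lt h⟩) (p ⟨i + 1, h⟩)

/-- The type of directed edges of the directed graph `(V, E)`. -/
def DEdge {V : Type*} (E : V → V → Prop) : Type _ := {e : V × V // E e.1 e.2}

/-- The edge relation of the directed line graph `l(G)`: there is an edge from
`e₁` to `e₂` iff the head of `e₁` equals the tail of `e₂`. -/
def LineE {V : Type*} (E : V → V → Prop) : DEdge E → DEdge E → Prop :=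
  fun e₁ e₂ => e₁.val.2 = e₂.val.1

/-- Path-length reduction: suppose `u` and `v` are connected in `G` by a directed
path `p` of minimal length `d ≥ 1` (i.e. every directed path from `u` to `v` has
length at least `d`), and let `xu` and `xv` be the vertices of the directed line
graph `l(G)` corresponding to the first edge `(v₀, v₁)` and the last edge
`(v_{d-1}, v_d)` of `p`.  Then the minimal length of a directed path from `xu` to
`xv` in `l(G)` is exactly `d - 1`: such a path of length `d - 1` exists, and every
directed path from `xu` to `xv` in `l(G)` has length at least `d - 1`. -/
theorem line_graph_distance {V : Type*} (E : V → V → Prop) (u v : V) (d : ℕ) (hd : 1 ≤ d)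
    (p : Fin (d + 1) → V) (hp : IsDipath E p)
    (hu : p ⟨0, by omega⟩ = u) (hv : p ⟨d, by omega⟩ = v)
    (hmin : ∀ (k : ℕ) (r : Fin (k + 1) → V), IsDipath E r →
      r ⟨0, by omega⟩ = u → r ⟨k, by omega⟩ = v → d ≤ k)
    (xu xv : DEdge E)
    (hxu : xu.val = (p ⟨0, by omega⟩, p ⟨1, by omega⟩))
    (hxv : xv.val = (p ⟨d - 1, by omega⟩, p ⟨d, by omega⟩)) :
    (∃ q : Fin (d - 1 + 1) → DEdge E, IsDipath (LineE E) q ∧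
      q ⟨0, by omega⟩ = xu ∧ q ⟨d - 1, by omega⟩ = xv) ∧
    (∀ (ℓ : ℕ) (q : Fin (ℓ + 1) → DEdge E), IsDipath (LineE E) q →
      q ⟨0, by omega⟩ = xu → q ⟨ℓ, by omega⟩ = xv → d - 1 ≤ ℓ) := by

  constructor
  · -- existence: q i = (p i, p (i+1))
    refine ⟨fun i => ⟨(p ⟨i, by omega⟩, p ⟨(i : ℕ) + 1, by omega⟩),
      hp i (by omega)⟩, ?_, ?_, ?_⟩
    · intro i h
      simp only [LineE]
    · apply Subtype.ext
      rw [hxu]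
    · apply Subtype.ext
      rw [hxv]
      have : d - 1 + 1 = d := by omega
      simp [this]
  · intro ℓ q hq hq0 hqℓ
    have hdle : d ≤ ℓ + 1 := by
      refine hmin (ℓ + 1) (fun i => if h : (i : ℕ) < ℓ + 1 then (q ⟨i, h⟩).val.1
        else (q ⟨ℓ, by omega⟩).val.2) ?_ ?_ ?_
      · intro i h
        by_cases h2 : i + 1 < ℓ + 1
        · have h1 : i < ℓ + 1 := by omega
          simp only [h1, h2, dif_pos]
          have := hq i h2
          rw [LineE] at this
          rw [← this]
          exact (q ⟨i, h1⟩).property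
        · have h1 : i < ℓ + 1 := by omega
          simp only [h1, dif_pos, dif_neg (by omega : ¬ (i + 1 < ℓ + 1))]
          have he : (⟨i, h1⟩ : Fin (ℓ + 1)) = ⟨ℓ, by omega⟩ := Fin.ext (by simp; omega)
          rw [he]
          exact (q ⟨ℓ, by omega⟩).property
      · simp only [dif_pos (by omega : (0:ℕ) < ℓ + 1)]
        rw [hq0, hxu, hu]
      · simp only [dif_neg (by omega : ¬ (ℓ + 1 < ℓ + 1))]
        rw [hqℓ, hxv, hv]
    omega
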